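/- The full subcategory of fibrant objects in any model category is admissibly left exact and right proper: the pullback of a morphism between fibrant objects along a fibration between fibrant objects exists in the subcategory, and the pullback of a weak equivalence between fibrant objects along a fibration between fibrant objects is a weak equivalence. -/

import Mathlib

universe w v u

open CategoryTheory CategoryTheory.Limits Opposite

namespace Paper

variable {C : Type u} [Category.{v} C]

/-- `g` is a retract of `f` in the arrow category. -/
def IsRetractOfArrow {X Y A B : C} (g : X ⟶ Y) (f : A ⟶ B) : Prop :=
  ∃ (i : X ⟶ A) (r : A ⟶ X) (i' : Y ⟶ B) (r' : B ⟶ Y),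
    i ≫ r = 𝟙 X ∧ i' ≫ r' = 𝟙 Y ∧ i ≫ f = g ≫ i' ∧ r ≫ g = f ≫ r'

/-- `f` is a pushout of some morphism belonging to `I`. -/
def IsPushoutOfElem (I : MorphismProperty C) {X Y : C} (f : X ⟶ Y) : Prop :=
  ∃ (A B : C) (g : A ⟶ B) (h : A ⟶ X) (k : B ⟶ Y), I g ∧ IsPushout g h k f

/-- The inclusion of the interval `[⊥, j)` into a preorder. -/
def ltInclusion {J : Type w} [Preorder J] (j : J) : Set.Iio j ⥤ J :=
  (show Monotone (fun k : Set.Iio j => (k : J)) from fun _ _ h => h).functor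

/-- The canonical cocone on the restriction of `F` to `[⊥, j)`, with vertex `F.obj j`. -/
@[simps]
def coconeLT {J : Type w} [Preorder J] (F : J ⥤ C) (j : J) :
    Limits.Cocone (ltInclusion j ⋙ F) where
  pt := F.obj j
  ι :=
    { app := fun k => F.map (homOfLE (le_of_lt k.2))
      naturality := fun k l h => by
        exact (F.map_comp _ _).symm.trans
          ((congrArg F.map (Subsingleton.elim _ _)).trans (Category.comp_id _).symm) }

/-- A witness that `f` is a transfinite composition of pushouts of morphisms of `I`:
a colimit-preserving well-ordered chain starting at the source of `f`, each successor
step of which is a pushout of a morphism of `I`, whose composition is `f`. -/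
structure TransfiniteCompositionWitness (I : MorphismProperty C) {X Y : C} (f : X ⟶ Y) where
  J : Type v
  [linOrd : LinearOrder J]
  [orderBot : OrderBot J]
  [succOrder : SuccOrder J]
  [wellFounded : WellFoundedLT J]
  F : J ⥤ C
  c : Limits.Cocone F
  isColimit : Limits.IsColimit c
  isoBot : X ≅ F.obj ⊥
  isoPt : c.pt ≅ Y
  fac : f = isoBot.hom ≫ c.ι.app ⊥ ≫ isoPt.hom
  succ : ∀ j : J, ¬ IsMax j → IsPushoutOfElem I (F.map (homOfLE (Order.le_succ j)))
  limit : ∀ j : J, Order.IsSuccLimit j → Nonempty (Limits.IsColimit (coconeLT F j))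

/-- `cell I`: the class of transfinite compositions of pushouts of morphisms of `I`. -/
def transfiniteCell (I : MorphismProperty C) : MorphismProperty C :=
  fun _ _ f => Nonempty (TransfiniteCompositionWitness I f)

/-- `inj I`: the class of morphisms with the right lifting property with respect to `I`. -/
def injClass (I : MorphismProperty C) : MorphismProperty C :=
  fun _ _ q => ∀ ⦃A B : C⦄ (g : A ⟶ B), I g → HasLiftingProperty g q

/-- `cof I`: the class of morphisms with the left lifting property with respect to `inj I`. -/
def cofClass (I : MorphismProperty C) : MorphismProperty C :=
  fun _ _ f => ∀ ⦃X Y : C⦄ (q : X ⟶ Y), injClass I q → HasLiftingProperty f q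

/-- A model structure on a category: weak equivalences, cofibrations and fibrations,
subject to the two-out-of-three, retract, lifting and factorization axioms. -/
structure ModelStructure (C : Type u) [Category.{v} C] : Type (max u v) where
  W : MorphismProperty C
  Cof : MorphismProperty C
  Fib : MorphismProperty C
  w_of_iso : ∀ {X Y : C} (f : X ⟶ Y), IsIso f → W f
  cof_of_iso : ∀ {X Y : C} (f : X ⟶ Y), IsIso f → Cof f
  fib_of_iso : ∀ {X Y : C} (f : X ⟶ Y), IsIso f → Fib f
  w_comp : ∀ {X Y Z : C} (f : X ⟶ Y) (g : Y ⟶ Z), W f → W g → W (f ≫ g)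
  w_cancel_left : ∀ {X Y Z : C} (f : X ⟶ Y) (g : Y ⟶ Z), W f → W (f ≫ g) → W g
  w_cancel_right : ∀ {X Y Z : C} (f : X ⟶ Y) (g : Y ⟶ Z), W g → W (f ≫ g) → W f
  cof_comp : ∀ {X Y Z : C} (f : X ⟶ Y) (g : Y ⟶ Z), Cof f → Cof g → Cof (f ≫ g)
  fib_comp : ∀ {X Y Z : C} (f : X ⟶ Y) (g : Y ⟶ Z), Fib f → Fib g → Fib (f ≫ g)
  w_retract : ∀ {X Y A B : C} (g : X ⟶ Y) (f : A ⟶ B),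
    IsRetractOfArrow g f → W f → W g
  cof_retract : ∀ {X Y A B : C} (g : X ⟶ Y) (f : A ⟶ B),
    IsRetractOfArrow g f → Cof f → Cof g
  fib_retract : ∀ {X Y A B : C} (g : X ⟶ Y) (f : A ⟶ B),
    IsRetractOfArrow g f → Fib f → Fib g
  lift_trivCof_fib : ∀ {A B X Y : C} (i : A ⟶ B) (p : X ⟶ Y),
    Cof i → W i → Fib p → HasLiftingProperty i p
  lift_cof_trivFib : ∀ {A B X Y : C} (i : A ⟶ B) (p : X ⟶ Y),
    Cof i → Fib p → W p → HasLiftingProperty i p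
  fact_cof_trivFib : ∀ {X Y : C} (f : X ⟶ Y),
    ∃ (Z : C) (i : X ⟶ Z) (p : Z ⟶ Y), Cof i ∧ Fib p ∧ W p ∧ i ≫ p = f
  fact_trivCof_fib : ∀ {X Y : C} (f : X ⟶ Y),
    ∃ (Z : C) (i : X ⟶ Z) (p : Z ⟶ Y), Cof i ∧ W i ∧ Fib p ∧ i ≫ p = f

variable {D : Type u} [Category.{v} D]

/-- An object is fibrant if the morphism to the terminal object is a fibration. -/
def ModelStructure.Fibrant [Limits.HasTerminal C] (M : ModelStructure C) (X : C) : Prop :=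
  M.Fib (Limits.terminal.from X)

/-- An object is cofibrant if the morphism from the initial object is a cofibration. -/
def ModelStructure.Cofibrant [Limits.HasInitial C] (M : ModelStructure C) (X : C) : Prop :=
  M.Cof (Limits.initial.to X)

variable (M : ModelStructure C)

/-- A full subcategory (given by a set of objects) is admissibly left exact if it contains
a pullback of any of its morphisms along any of its fibrations. -/
def AdmissiblyLeftExact (E : Set C) : Prop :=
  ∀ {X X' Y : C} (f : X' ⟶ X) (p : Y ⟶ X), X ∈ E → X' ∈ E → Y ∈ E → M.Fib p →
    ∃ (P : C) (fst : P ⟶ X') (snd : P ⟶ Y), P ∈ E ∧ IsPullback fst snd f p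

/-- A full subcategory is partially left exact if it contains a pullback of any of its
weak equivalences along any of its fibrations. -/
def PartiallyLeftExact (E : Set C) : Prop :=
  ∀ {X X' Y : C} (f : X' ⟶ X) (p : Y ⟶ X), X ∈ E → X' ∈ E → Y ∈ E → M.W f → M.Fib p →
    ∃ (P : C) (fst : P ⟶ X') (snd : P ⟶ Y), P ∈ E ∧ IsPullback fst snd f p

/-- A full subcategory is right proper if, within it, pullbacks of weak equivalences along
fibrations are weak equivalences. -/
def RightProperOn (E : Set C) : Prop :=
  ∀ {X X' Y P : C} (w : X' ⟶ X) (p : Y ⟶ X) (fst : P ⟶ X') (snd : P ⟶ Y),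
    X ∈ E → X' ∈ E → Y ∈ E → P ∈ E → M.W w → M.Fib p →
    IsPullback fst snd w p → M.W snd

/-- A full subcategory is stable under trivial fibrations if the source of any trivial
fibration with target in it belongs to it. -/
def StableUnderTrivFib (E : Set C) : Prop :=
  ∀ {X Y : C} (p : Y ⟶ X), X ∈ E → M.Fib p → M.W p → Y ∈ E

/-!
Reedy's argument. Brown's factorization through `X' ⨯ X` writes a weak equivalence `w : X' ⟶ X`
between fibrant objects as a section `s` of a trivial fibration followed by a trivial fibration.
Base change along a fibration preserves trivial fibrations, so it remains to see that the base
change of such a section `j : A ⟶ N` (with retraction `t`) along a fibration `g : E ⟶ N` is a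
weak equivalence. For this, `E` is compared with `F = E ×_A N`, formed along `g ≫ t` and `t`:
the maps `E ⟶ F` given by `(𝟙, g)` and `(𝟙, g ≫ t ≫ j)` are both sections of the trivial fibration
`F ⟶ E`, the second one exhibits `E` as the base change of `j` along `F ⟶ N`, and the base change
of `j` along `g` is then a retract of a weak equivalence.
-/

lemma isRetractOfArrow_of_retractArrow {X Y A B : C} {f : X ⟶ Y} {g : A ⟶ B}
    (h : RetractArrow f g) : IsRetractOfArrow f g :=
  ⟨h.i.left, h.r.left, h.i.right, h.r.right, h.retract_left, h.retract_right, h.i_w, h.r_w⟩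

/-- `g` is a retract of `h` over `N`, hence so are their base changes along `j`. -/
lemma isRetractOfArrow_of_isPullback {A N E G P K : C} {j : A ⟶ N} {g : E ⟶ N} {h : G ⟶ N}
    {α : E ⟶ G} {l : G ⟶ E} (hα : α ≫ h = g) (hl : l ≫ g = h) (hαl : α ≫ l = 𝟙 E)
    {a : P ⟶ A} {v : P ⟶ E} (hP : IsPullback a v j g)
    {b : K ⟶ A} {u : K ⟶ G} (hK : IsPullback b u j h) : IsRetractOfArrow v u := by
  refine ⟨hK.lift a (v ≫ α) (by rw [Category.assoc, hα, hP.w]),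
    hP.lift b (u ≫ l) (by rw [Category.assoc, hl, hK.w]), α, l, ?_, hαl,
    hK.lift_snd _ _ _, hP.lift_snd _ _ _⟩
  apply hP.hom_ext
  · simp only [Category.assoc, IsPullback.lift_fst, Category.id_comp]
  · simp only [Category.assoc, IsPullback.lift_snd, IsPullback.lift_snd_assoc, hαl,
      Category.comp_id, Category.id_comp]

lemma isPullback_of_section {A N E F : C} {j : A ⟶ N} {t : N ⟶ A} (hjt : j ≫ t = 𝟙 A)
    {b : E ⟶ A} {f₁ : F ⟶ E} {f₂ : F ⟶ N} (hF : IsPullback f₁ f₂ b t)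
    {κ : E ⟶ F} (hκ₁ : κ ≫ f₁ = 𝟙 E) (hκ₂ : κ ≫ f₂ = b ≫ j) : IsPullback b κ j f₂ :=
  (IsPullback.of_right (by simpa only [hκ₁, hjt] using IsPullback.id_horiz b)
    hκ₂ hF).flip

namespace ModelStructure

lemma fib_of_hasLiftingProperty {X Y : C} (p : X ⟶ Y)
    (h : ∀ {A B : C} (i : A ⟶ B), M.Cof i → M.W i → HasLiftingProperty i p) : M.Fib p := by
  obtain ⟨Z, i, q, hCof, hW, hFib, hfac⟩ := M.fact_trivCof_fib p
  have := h i hCof hW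
  exact M.fib_retract p q
    (isRetractOfArrow_of_retractArrow (RetractArrow.ofRightLiftingProperty hfac)) hFib

lemma trivFib_of_hasLiftingProperty {X Y : C} (p : X ⟶ Y)
    (h : ∀ {A B : C} (i : A ⟶ B), M.Cof i → HasLiftingProperty i p) : M.Fib p ∧ M.W p := by
  obtain ⟨Z, i, q, hCof, hFib, hW, hfac⟩ := M.fact_cof_trivFib p
  have := h i hCof
  have hret := isRetractOfArrow_of_retractArrow (RetractArrow.ofRightLiftingProperty hfac)
  exact ⟨M.fib_retract p q hret hFib, M.w_retract p q hret hW⟩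

lemma fib_of_isPullback {P X Y Z : C} {fst : P ⟶ X} {snd : P ⟶ Y} {f : X ⟶ Z} {p : Y ⟶ Z}
    (h : IsPullback fst snd f p) (hp : M.Fib p) : M.Fib fst :=
  M.fib_of_hasLiftingProperty fst fun i hc hw =>
    have := M.lift_trivCof_fib i p hc hw hp
    h.flip.hasLiftingProperty i

lemma trivFib_of_isPullback {P X Y Z : C} {fst : P ⟶ X} {snd : P ⟶ Y} {f : X ⟶ Z}
    {p : Y ⟶ Z} (h : IsPullback fst snd f p) (hp : M.Fib p) (hwp : M.W p) :
    M.Fib fst ∧ M.W fst :=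
  M.trivFib_of_hasLiftingProperty fst fun i hc =>
    have := M.lift_cof_trivFib i p hc hp hwp
    h.flip.hasLiftingProperty i

lemma w_of_section {X Y : C} {s : X ⟶ Y} {r : Y ⟶ X} (hsr : s ≫ r = 𝟙 X) (hr : M.W r) :
    M.W s :=
  M.w_cancel_right s r hr (by rw [hsr]; exact M.w_of_iso _ inferInstance)

lemma w_of_isPullback_of_trivFib {K E G F : C} {ρ : K ⟶ E} {u : K ⟶ G} {κ : E ⟶ F}
    {β : G ⟶ F} (h : IsPullback ρ u κ β) (hκ : M.W κ) (hβ : M.Fib β) (hwβ : M.W β) :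
    M.W u :=
  M.w_cancel_right u β hwβ <| by
    rw [← h.w]
    exact M.w_comp ρ κ (M.trivFib_of_isPullback h hβ hwβ).2 hκ

/-- Factor `ι = α ≫ β` with `α` a trivial cofibration. A lift of `α` against `ι ≫ f` makes the
base change of `j` along `ι ≫ f` a retract of its base change along `β ≫ f`, which is the base
change of `κ` along the trivial fibration `β`. -/
lemma w_of_isPullback_comp [HasPullbacks C] {A N F E' E P : C} {j : A ⟶ N} {f : F ⟶ N}
    {b : E' ⟶ A} {κ : E' ⟶ F} (hE' : IsPullback b κ j f) (hκ : M.W κ)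
    {ι : E ⟶ F} (hι : M.W ι) (hg : M.Fib (ι ≫ f))
    {a : P ⟶ A} {v : P ⟶ E} (hP : IsPullback a v j (ι ≫ f)) : M.W v := by
  obtain ⟨G, α, β, hCofα, hWα, hFibβ, hαβ⟩ := M.fact_trivCof_fib ι
  have hWβ : M.W β := M.w_cancel_left α β hWα (hαβ ▸ hι)
  have hK := IsPullback.of_hasPullback j (β ≫ f)
  have hρ := IsPullback.of_right' hK hE'
  have hα : α ≫ β ≫ f = ι ≫ f := by rw [← Category.assoc, hαβ]
  have sq : CommSq (𝟙 E) α (ι ≫ f) (β ≫ f) := ⟨by rw [Category.id_comp, hα]⟩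
  have := M.lift_trivCof_fib α _ hCofα hWα hg
  exact M.w_retract v _
    (isRetractOfArrow_of_isPullback hα sq.fac_right sq.fac_left hP hK)
    (M.w_of_isPullback_of_trivFib hρ hκ hFibβ hWβ)

lemma w_of_isPullback_section [HasPullbacks C] {A N E P : C} {j : A ⟶ N} {t : N ⟶ A}
    (hjt : j ≫ t = 𝟙 A) (hFt : M.Fib t) (hWt : M.W t) {g : E ⟶ N} (hg : M.Fib g)
    {a : P ⟶ A} {v : P ⟶ E} (hP : IsPullback a v j g) : M.W v := by
  have hF := IsPullback.of_hasPullback (g ≫ t) t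
  set f₂ := pullback.snd (g ≫ t) t
  have hWf₁ : M.W (pullback.fst (g ≫ t) t) := (M.trivFib_of_isPullback hF hFt hWt).2
  let κ : E ⟶ pullback (g ≫ t) t := pullback.lift (𝟙 E) (g ≫ t ≫ j) (by simp [hjt])
  let ι : E ⟶ pullback (g ≫ t) t := pullback.lift (𝟙 E) g (Category.id_comp _)
  have hE : IsPullback (g ≫ t) κ j f₂ :=
    isPullback_of_section hjt hF (pullback.lift_fst _ _ _)
      ((pullback.lift_snd _ _ _).trans (Category.assoc _ _ _).symm)
  have hιf₂ : ι ≫ f₂ = g := pullback.lift_snd _ _ _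
  exact M.w_of_isPullback_comp hE (M.w_of_section (pullback.lift_fst _ _ _) hWf₁)
    (M.w_of_section (pullback.lift_fst _ _ _) hWf₁) (hιf₂ ▸ hg) (hιf₂ ▸ hP)

lemma fibrant_of_fib [HasTerminal C] {X Y : C} {f : X ⟶ Y} (hf : M.Fib f) (hY : M.Fibrant Y) :
    M.Fibrant X := by
  rw [Fibrant, ← terminal.comp_from f]
  exact M.fib_comp _ _ hf hY

/-- Brown's factorization lemma. -/
lemma exists_section_trivFib_factorization [HasTerminal C] [HasBinaryProducts C]
    {X' X : C} (w : X' ⟶ X) (hw : M.W w) (hX' : M.Fibrant X') (hX : M.Fibrant X) :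
    ∃ (G : C) (s : X' ⟶ G) (r : G ⟶ X') (q : G ⟶ X), s ≫ r = 𝟙 X' ∧ s ≫ q = w ∧
      M.Fib r ∧ M.W r ∧ M.Fib q ∧ M.W q := by
  have hprod := IsPullback.of_hasBinaryProduct' X' X
  obtain ⟨G, s, π, hCof, hWs, hFibπ, hfac⟩ := M.fact_trivCof_fib (prod.lift (𝟙 X') w)
  have hsr : s ≫ π ≫ prod.fst = 𝟙 X' := by rw [← Category.assoc, hfac, prod.lift_fst]
  have hsq : s ≫ π ≫ prod.snd = w := by rw [← Category.assoc, hfac, prod.lift_snd]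
  refine ⟨G, s, π ≫ prod.fst, π ≫ prod.snd, hsr, hsq,
    M.fib_comp _ _ hFibπ (M.fib_of_isPullback hprod hX), ?_,
    M.fib_comp _ _ hFibπ (M.fib_of_isPullback hprod.flip hX'), ?_⟩
  · exact M.w_cancel_left s _ hWs (hsr ▸ M.w_of_iso _ inferInstance)
  · exact M.w_cancel_left s _ hWs (hsq ▸ hw)

lemma w_of_isPullback_of_fibrant [HasTerminal C] [HasBinaryProducts C] [HasPullbacks C]
    {X X' Y P : C} {w : X' ⟶ X} {p : Y ⟶ X} {fst : P ⟶ X'} {snd : P ⟶ Y}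
    (h : IsPullback fst snd w p) (hw : M.W w) (hp : M.Fib p)
    (hX' : M.Fibrant X') (hX : M.Fibrant X) : M.W snd := by
  obtain ⟨G, s, r, q, hsr, hsq, hFr, hWr, hFq, hWq⟩ :=
    M.exists_section_trivFib_factorization w hw hX' hX
  have hQ := IsPullback.of_hasPullback q p
  have hs := (IsPullback.of_right' (hsq ▸ h.flip) hQ.flip).flip
  rw [← hQ.flip.lift_fst snd (fst ≫ s) (by rw [Category.assoc, hsq, h.w])]
  exact M.w_comp _ _ (M.w_of_isPullback_section hsr hFr hWr (M.fib_of_isPullback hQ hp) hs)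
    (M.trivFib_of_isPullback hQ.flip hFq hWq).2

end ModelStructure

/-- (Reedy.) In any model category, the full subcategory of fibrant
objects is admissibly left exact and right proper: pullbacks of morphisms between fibrant
objects along fibrations between fibrant objects exist in it, and the pullback of a weak
equivalence between fibrant objects along a fibration between fibrant objects is a weak
equivalence. -/
theorem statement13 [HasLimits C] (M : ModelStructure C) :
    AdmissiblyLeftExact M {X : C | M.Fibrant X} ∧
      RightProperOn M {X : C | M.Fibrant X} := by
  constructor
  · intro X X' Y f p _ hX' _ hp
    have h := IsPullback.of_hasPullback f p
    exact ⟨_, _, _, M.fibrant_of_fib (M.fib_of_isPullback h hp) hX', h⟩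
  · intro X X' Y P w p fst snd hX hX' _ _ hw hp h
    exact M.w_of_isPullback_of_fibrant h hw hp hX' hX

end Paper
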